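/- arXiv:math/0404525 — 2 statements merged into one kernel-verified Lean document; each statement's English description precedes it below -/
import Mathlib

section
/- The hyperbolic dimension is a quasi-isometry invariant of metric spaces: if there is a quasi-isometric map f : X → X' whose image is cobounded in X' (i.e. there is λ ≥ 0 such that every point of X' lies within distance λ of f(X)), then hypdim X = hypdim X'. -/
open Metric Set ENNReal

/-- A subset `A` of a metric space is `(N,R)`-bounded: for every `ρ ∈ (0,1)` and every
`r ≥ R ρ`, every ball of radius `r` in `A` (with the induced metric) contains at most
`N ρ` points that are pairwise at distance `≥ ρ·r`. -/
def SubsetNRBounded {X : Type*} [MetricSpace X] (A : Set X) (N : ℝ → ℕ) (R : ℝ → ℝ) : Prop :=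
  ∀ ρ : ℝ, 0 < ρ → ρ < 1 → ∀ r : ℝ, R ρ ≤ r → ∀ a ∈ A, ∀ S : Finset X,
    (S : Set X) ⊆ A ∩ Metric.closedBall a r →
    ((S : Set X).Pairwise fun p q => ρ * r ≤ dist p q) → S.card ≤ N ρ

/-- A metric space is `(N,R)`-bounded. -/
def IsNRBounded (X : Type*) [MetricSpace X] (N : ℝ → ℕ) (R : ℝ → ℝ) : Prop :=
  SubsetNRBounded (Set.univ : Set X) N R

/-- A metric space has uniformly bounded growth rate (is an UBG-space) if it is
`(N,R)`-bounded for some `N ∈ 𝒩` and `R ∈ ℛ`. -/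
def IsUBG (X : Type*) [MetricSpace X] : Prop :=
  ∃ N : ℝ → ℕ, ∃ R : ℝ → ℝ, (∀ ρ, 0 ≤ R ρ) ∧ IsNRBounded X N R

/-- A subset is `N`-bounded if it is `(N,R)`-bounded for some `R ∈ ℛ`. -/
def SubsetNBounded {X : Type*} [MetricSpace X] (A : Set X) (N : ℝ → ℕ) : Prop :=
  ∃ R : ℝ → ℝ, (∀ ρ, 0 ≤ R ρ) ∧ SubsetNRBounded A N R

/-- A covering `𝒰` is uniformly `N`-bounded: all its elements are `(N,R)`-bounded for one
common `R ∈ ℛ`, and every finite union of its elements is `N`-bounded. -/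
def UniformlyNBounded {X : Type*} [MetricSpace X] (𝒰 : Set (Set X)) (N : ℝ → ℕ) : Prop :=
  (∃ R : ℝ → ℝ, (∀ ρ, 0 ≤ R ρ) ∧ ∀ U ∈ 𝒰, SubsetNRBounded U N R) ∧
  ∀ F : Finset (Set X), ↑F ⊆ 𝒰 → SubsetNBounded (⋃₀ (F : Set (Set X))) N

/-- The Lebesgue number of a covering: `L(𝒰) = inf_x sup_{U ∈ 𝒰} dist (x, X∖U)`. -/
noncomputable def LebesgueNumber {X : Type*} [MetricSpace X] (𝒰 : Set (Set X)) : ℝ≥0∞ :=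
  ⨅ x : X, ⨆ U ∈ 𝒰, EMetric.infEdist x Uᶜ

/-- The multiplicity of a covering is `≤ m`: every point belongs to at most `m` of its
elements. -/
def MultiplicityLE {X : Type*} [MetricSpace X] (𝒰 : Set (Set X)) (m : ℕ) : Prop :=
  ∀ x : X, ∀ F : Finset (Set X), ↑F ⊆ 𝒰 → (∀ U ∈ F, x ∈ U) → F.card ≤ m

/-- `HypdimLE X n`: for every `d > 0` there are `N ∈ 𝒩` and a covering of `X` with
Lebesgue number `≥ d` and multiplicity `≤ n+1` which is uniformly `N`-bounded. -/
def HypdimLE (X : Type*) [MetricSpace X] (n : ℕ) : Prop :=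
  ∀ d : ℝ, 0 < d → ∃ N : ℝ → ℕ, ∃ 𝒰 : Set (Set X),
    ⋃₀ 𝒰 = Set.univ ∧ UniformlyNBounded 𝒰 N ∧
    ENNReal.ofReal d ≤ LebesgueNumber 𝒰 ∧ MultiplicityLE 𝒰 (n + 1)

/-- The hyperbolic dimension of a metric space. -/
noncomputable def hypdim (X : Type*) [MetricSpace X] : ℕ∞ :=
  sInf {k : ℕ∞ | ∃ n : ℕ, k = n ∧ HypdimLE X n}


/-- A map between metric spaces is quasi-isometric if it is `(Λ,λ)`-quasi-isometric for
some `Λ ≥ 1`, `λ ≥ 0`. -/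
def QuasiIsometricMap {X Y : Type*} [MetricSpace X] [MetricSpace Y] (f : X → Y) : Prop :=
  ∃ Λ lam : ℝ, 1 ≤ Λ ∧ 0 ≤ lam ∧ ∀ x x' : X,
    dist x x' / Λ - lam ≤ dist (f x) (f x') ∧ dist (f x) (f x') ≤ Λ * dist x x' + lam

private lemma pullback_NRBounded {X X' : Type*} [MetricSpace X] [MetricSpace X']
    (f : X → X') (Λ lam : ℝ) (hΛ : 1 ≤ Λ) (hlam : 0 ≤ lam)
    (hqi : ∀ x x' : X, dist x x' / Λ - lam ≤ dist (f x) (f x') ∧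
      dist (f x) (f x') ≤ Λ * dist x x' + lam)
    (B : Set X') (N' : ℝ → ℕ) (R' : ℝ → ℝ) (hR' : ∀ ρ, 0 ≤ R' ρ)
    (hB : SubsetNRBounded B N' R') :
    SubsetNRBounded (f ⁻¹' B) (fun ρ => N' (ρ / (2 * Λ ^ 2)))
      (fun ρ => R' (ρ / (2 * Λ ^ 2)) + 4 * lam * Λ / |ρ| + 4 * Λ) := by
  classical
  intro ρ hρ0 hρ1 r hr a ha S hS hsep
  have hΛ0 : (0:ℝ) < Λ := by linarith
  set ρ' := ρ / (2 * Λ ^ 2) with hρ'def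
  have hρ'0 : 0 < ρ' := by rw [hρ'def]; positivity
  have hρ'1 : ρ' < 1 := by
    rw [hρ'def, div_lt_one (by positivity)]; nlinarith
  simp only [abs_of_pos hρ0] at hr
  have hdiv0 : 0 ≤ 4 * lam * Λ / ρ := by positivity
  have hR'0 : 0 ≤ R' ρ' := hR' ρ'
  have hr0 : (0:ℝ) < r := by nlinarith
  have hrlam : 4 * lam * Λ ≤ r * ρ := by
    have h1 : 4 * lam * Λ / ρ ≤ r := by nlinarith
    calc 4 * lam * Λ = (4 * lam * Λ / ρ) * ρ := by field_simp
    _ ≤ r * ρ := by nlinarith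
  set r' := Λ * r + lam with hr'def
  have hr'0 : 0 < r' := by rw [hr'def]; nlinarith
  clear_value ρ' r'
  -- key separation estimate
  have hkey : ρ' * r' ≤ ρ * r / Λ - lam := by
    have hlamle : lam ≤ Λ ^ 2 * lam := by nlinarith [mul_nonneg (by nlinarith : (0:ℝ) ≤ Λ^2 - 1) hlam]
    have hpoly : ρ * (Λ * r + lam) ≤ 2 * Λ * (ρ * r) - 2 * Λ ^ 2 * lam := by
      nlinarith [mul_le_mul_of_nonneg_left hrlam hΛ0.le, mul_nonneg hlam hρ0.le]
    have h2 : ρ' * r' = ρ * (Λ * r + lam) / (2 * Λ ^ 2) := by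
      rw [hρ'def, hr'def]; ring
    have h3 : (2 * Λ * (ρ * r) - 2 * Λ ^ 2 * lam) / (2 * Λ ^ 2) = ρ * r / Λ - lam := by
      field_simp
    rw [h2, ← h3]
    exact div_le_div_of_nonneg_right hpoly (by positivity) |>.trans_eq rfl
  have hsepf : ∀ p ∈ S, ∀ q ∈ S, p ≠ q → ρ' * r' ≤ dist (f p) (f q) := by
    intro p hp q hq hne
    have h1 : ρ * r ≤ dist p q := hsep hp hq hne
    have h2 : ρ * r / Λ ≤ dist p q / Λ := div_le_div_of_nonneg_right h1 hΛ0.le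
    have h3 := (hqi p q).1
    have h4 : ρ * r / Λ - lam ≤ dist (f p) (f q) := by linarith
    linarith [hkey]
  have hposdist : 0 < ρ' * r' := mul_pos hρ'0 hr'0
  have hinj : Set.InjOn f (S : Set X) := by
    intro p hp q hq hpq
    by_contra hne
    have := hsepf p hp q hq hne
    rw [hpq, dist_self] at this
    linarith
  have hsubset : ((S.image f : Finset X') : Set X') ⊆ B ∩ Metric.closedBall (f a) r' := by
    intro y hy
    simp only [Finset.coe_image, Set.mem_image] at hy
    obtain ⟨p, hp, rfl⟩ := hy
    have hpS : p ∈ (S : Set X) := hp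
    obtain ⟨hpB, hpball⟩ := hS hpS
    refine ⟨hpB, ?_⟩
    rw [Metric.mem_closedBall] at hpball ⊢
    have := (hqi p a).2
    nlinarith
  have hpair : ((S.image f : Finset X') : Set X').Pairwise fun p q => ρ' * r' ≤ dist p q := by
    intro y hy z hz hyz
    simp only [Finset.coe_image, Set.mem_image] at hy hz
    obtain ⟨p, hp, rfl⟩ := hy
    obtain ⟨q, hq, rfl⟩ := hz
    exact hsepf p hp q hq (fun h => hyz (by rw [h]))
  have hr' : R' ρ' ≤ r' := by rw [hρ'def, hr'def]; nlinarith
  have hcard : (S.image f).card = S.card := Finset.card_image_of_injOn hinj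
  calc S.card = (S.image f).card := hcard.symm
    _ ≤ N' ρ' := hB ρ' hρ'0 hρ'1 r' hr' (f a) ha (S.image f) hsubset hpair
    _ = (fun ρ => N' (ρ / (2 * Λ ^ 2))) ρ := by rw [hρ'def]

private lemma hypdimLE_pullback {X X' : Type*} [MetricSpace X] [MetricSpace X']
    (f : X → X') (hf : QuasiIsometricMap f) (n : ℕ) (h : HypdimLE X' n) :
    HypdimLE X n := by
  classical
  obtain ⟨Λ, lam, hΛ, hlam, hqi⟩ := hf
  have hΛ0 : (0:ℝ) < Λ := by linarith
  intro d hd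
  obtain ⟨N', 𝒰', hcov, ⟨⟨R', hR'0, hR'⟩, hfin⟩, hleb, hmult⟩ :=
    h (Λ * d + lam + 1) (by nlinarith)
  -- choice function selecting a preimage representative
  set φ : Set X → Set X' := fun U =>
    if h : ∃ U' ∈ 𝒰', f ⁻¹' U' = U then h.choose else ∅ with hφdef
  have hφ : ∀ U ∈ (fun U' => f ⁻¹' U') '' 𝒰', φ U ∈ 𝒰' ∧ f ⁻¹' (φ U) = U := by
    intro U hU
    obtain ⟨U', hU', rfl⟩ := hU
    have hex : ∃ V ∈ 𝒰', f ⁻¹' V = f ⁻¹' U' := ⟨U', hU', rfl⟩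
    simp only [hφdef, dif_pos hex]
    exact ⟨hex.choose_spec.1, hex.choose_spec.2⟩
  refine ⟨fun ρ => N' (ρ / (2 * Λ ^ 2)), (fun U' => f ⁻¹' U') '' 𝒰', ?_, ⟨?_, ?_⟩, ?_, ?_⟩
  · -- covering
    apply Set.eq_univ_of_forall
    intro x
    have : f x ∈ ⋃₀ 𝒰' := by rw [hcov]; trivial
    obtain ⟨U', hU', hfx⟩ := this
    exact ⟨f ⁻¹' U', ⟨U', hU', rfl⟩, hfx⟩
  · -- common R for elements
    refine ⟨fun ρ => R' (ρ / (2 * Λ ^ 2)) + 4 * lam * Λ / |ρ| + 4 * Λ, ?_, ?_⟩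
    · intro ρ
      have := hR'0 (ρ / (2 * Λ ^ 2))
      have h2 : (0:ℝ) ≤ 4 * lam * Λ / |ρ| := by positivity
      nlinarith
    · rintro U ⟨U', hU', rfl⟩
      exact pullback_NRBounded f Λ lam hΛ hlam hqi U' N' R' hR'0 (hR' U' hU')
  · -- finite unions
    intro F hF
    set F' : Finset (Set X') := F.image φ with hF'def
    have hF'sub : ↑F' ⊆ 𝒰' := by
      intro V hV
      simp only [hF'def, Finset.coe_image, Set.mem_image] at hV
      obtain ⟨U, hU, rfl⟩ := hV
      exact (hφ U (hF hU)).1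
    obtain ⟨R'', hR''0, hR''⟩ := hfin F' hF'sub
    have hunion : ⋃₀ (F : Set (Set X)) = f ⁻¹' (⋃₀ (F' : Set (Set X'))) := by
      ext x
      simp only [Set.mem_sUnion, Set.mem_preimage, hF'def, Finset.coe_image,
        Set.mem_image, Finset.mem_coe]
      constructor
      · rintro ⟨U, hU, hxU⟩
        refine ⟨φ U, ⟨U, hU, rfl⟩, ?_⟩
        have := (hφ U (hF hU)).2
        rw [← this] at hxU
        exact hxU
      · rintro ⟨V, ⟨U, hU, rfl⟩, hxV⟩
        refine ⟨U, hU, ?_⟩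
        have := (hφ U (hF hU)).2
        rw [← this]
        exact hxV
    rw [hunion]
    refine ⟨fun ρ => R'' (ρ / (2 * Λ ^ 2)) + 4 * lam * Λ / |ρ| + 4 * Λ, ?_, ?_⟩
    · intro ρ
      have := hR''0 (ρ / (2 * Λ ^ 2))
      have h2 : (0:ℝ) ≤ 4 * lam * Λ / |ρ| := by positivity
      nlinarith
    · exact pullback_NRBounded f Λ lam hΛ hlam hqi _ N' R'' hR''0 hR''
  · -- Lebesgue number
    refine le_iInf fun x => ?_
    have h1 : ENNReal.ofReal (Λ * d + lam + 1) ≤ ⨆ U' ∈ 𝒰', EMetric.infEdist (f x) U'ᶜ :=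
      le_trans hleb (iInf_le _ (f x))
    have h2 : ENNReal.ofReal (Λ * d + lam) < ⨆ U' ∈ 𝒰', EMetric.infEdist (f x) U'ᶜ := by
      refine lt_of_lt_of_le ?_ h1
      exact ENNReal.ofReal_lt_ofReal_iff (by nlinarith) |>.mpr (by linarith)
    obtain ⟨U', hU'⟩ := lt_iSup_iff.mp h2
    by_cases hm : U' ∈ 𝒰'
    · rw [iSup_pos hm] at hU'
      have hkey : ENNReal.ofReal (Λ * d + lam) ≤ EMetric.infEdist (f x) U'ᶜ := hU'.le
      have hdle : ENNReal.ofReal d ≤ EMetric.infEdist x (f ⁻¹' U')ᶜ := by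
        refine EMetric.le_infEdist.2 ?_
        intro z hz
        have hz' : f z ∈ U'ᶜ := hz
        have h3 : ENNReal.ofReal (Λ * d + lam) ≤ edist (f x) (f z) :=
          le_trans hkey (EMetric.infEdist_le_edist_of_mem hz')
        rw [edist_dist] at h3
        have h4 : Λ * d + lam ≤ dist (f x) (f z) :=
          (ENNReal.ofReal_le_ofReal_iff dist_nonneg).mp h3
        have h5 := (hqi x z).2
        have h6 : d ≤ dist x z := by nlinarith
        rw [edist_dist]
        exact ENNReal.ofReal_le_ofReal h6
      refine le_trans hdle ?_
      exact le_iSup₂ (f := fun U (_ : U ∈ (fun U' => f ⁻¹' U') '' 𝒰') =>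
        EMetric.infEdist x Uᶜ) (f ⁻¹' U') ⟨U', hm, rfl⟩
    · rw [iSup_neg hm] at hU'
      exact absurd hU' (by simp)
  · -- multiplicity
    intro x F hF hmem
    have hinj : Set.InjOn φ (F : Set (Set X)) := by
      intro U₁ h₁ U₂ h₂ heq
      have e₁ := (hφ U₁ (hF h₁)).2
      have e₂ := (hφ U₂ (hF h₂)).2
      rw [← e₁, ← e₂, heq]
    have hcard : (F.image φ).card = F.card := Finset.card_image_of_injOn hinj
    rw [← hcard]
    refine hmult (f x) (F.image φ) ?_ ?_
    · intro V hV
      simp only [Finset.coe_image, Set.mem_image, Finset.mem_coe] at hV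
      obtain ⟨U, hU, rfl⟩ := hV
      exact (hφ U (hF hU)).1
    · intro V hV
      simp only [Finset.mem_image] at hV
      obtain ⟨U, hU, rfl⟩ := hV
      have := (hφ U (hF (by exact hU))).2
      have hxU : x ∈ U := hmem U hU
      rw [← this] at hxU
      exact hxU

/-- Corollary 4.2: the hyperbolic dimension is a quasi-isometry invariant.  If
`f : X → X'` is a quasi-isometric map whose image is cobounded in `X'`, then
`hypdim X = hypdim X'`. -/
theorem hypdim_quasiIsometry_invariant {X X' : Type*} [MetricSpace X] [MetricSpace X']
    (f : X → X') (hf : QuasiIsometricMap f)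
    (hcobdd : ∃ lam : ℝ, 0 ≤ lam ∧ ∀ y : X', ∃ x : X, dist y (f x) ≤ lam) :
    hypdim X = hypdim X' := by
  have h1 : hypdim X ≤ hypdim X' := by
    apply sInf_le_sInf
    rintro k ⟨n, rfl, hn⟩
    exact ⟨n, rfl, hypdimLE_pullback f hf n hn⟩
  obtain ⟨Λ, lam, hΛ, hlam, hqi⟩ := hf
  have hΛ0 : (0:ℝ) < Λ := by linarith
  obtain ⟨μ, hμ, hcb⟩ := hcobdd
  choose g hg using hcb
  have hgqi : QuasiIsometricMap g := by
    refine ⟨Λ, Λ * (2 * μ + lam), hΛ, by nlinarith, fun y y' => ?_⟩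
    have hfu := (hqi (g y) (g y')).2
    have hfl := (hqi (g y) (g y')).1
    have ht1 : dist (f (g y)) (f (g y')) ≤ dist y y' + 2 * μ := by
      have h4 := dist_triangle4 (f (g y)) y y' (f (g y'))
      have := hg y
      have := hg y'
      rw [dist_comm (f (g y)) y] at h4
      linarith
    have ht2 : dist y y' ≤ dist (f (g y)) (f (g y')) + 2 * μ := by
      have h4 := dist_triangle4 y (f (g y)) (f (g y')) y'
      have := hg y
      have := hg y'
      rw [dist_comm (f (g y')) y'] at h4
      linarith
    constructor
    · -- lower bound
      rw [div_sub' (ne_of_gt hΛ0), div_le_iff₀ hΛ0]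
      nlinarith [mul_nonneg (by nlinarith : (0:ℝ) ≤ Λ * Λ - 1) (by linarith : (0:ℝ) ≤ 2 * μ + lam)]
    · -- upper bound
      have h5 : dist (g y) (g y') / Λ ≤ dist (f (g y)) (f (g y')) + lam := by linarith
      rw [div_le_iff₀ hΛ0] at h5
      nlinarith
  have h2 : hypdim X' ≤ hypdim X := by
    apply sInf_le_sInf
    rintro k ⟨n, rfl, hn⟩
    exact ⟨n, rfl, hypdimLE_pullback g hgqi n hn⟩
  exact le_antisymm h1 h2
end

section
/- For every metric space X one has hypdim′ X ≤ hypdim X, where hypdim′ is defined using d-multiplicity in place of multiplicity. -/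
open Metric Set ENNReal

/-- The `d`-multiplicity of a covering is `≤ m`: no ball of radius `d` meets more than
`m` elements of the covering. -/
def DMultiplicityLE {X : Type*} [MetricSpace X] (𝒰 : Set (Set X)) (d : ℝ) (m : ℕ) : Prop :=
  ∀ x : X, ∀ F : Finset (Set X), ↑F ⊆ 𝒰 →
    (∀ U ∈ F, (U ∩ Metric.ball x d).Nonempty) → F.card ≤ m

/-- `HypdimAuxLE X n`: for every `d > 0` there are `N ∈ 𝒩` and a uniformly `N`-bounded
covering of `X` with `d`-multiplicity `≤ n+1`. -/
def HypdimAuxLE (X : Type*) [MetricSpace X] (n : ℕ) : Prop :=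
  ∀ d : ℝ, 0 < d → ∃ N : ℝ → ℕ, ∃ 𝒰 : Set (Set X),
    ⋃₀ 𝒰 = Set.univ ∧ UniformlyNBounded 𝒰 N ∧ DMultiplicityLE 𝒰 d (n + 1)

/-- The auxiliary hyperbolic dimension, defined via `d`-multiplicity. -/
noncomputable def hypdimAux (X : Type*) [MetricSpace X] : ℕ∞ :=
  sInf {k : ℕ∞ | ∃ n : ℕ, k = n ∧ HypdimAuxLE X n}

/-!
Given a covering `𝒰` with Lebesgue number `≥ 2d` and multiplicity `≤ n + 1`, replace every
`U ∈ 𝒰` by the set of points at distance `≥ d` from `X ∖ U`. These smaller sets still cover `X`,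
and they inherit uniform `N`-boundedness from `𝒰`. A `d`-ball meeting one of them has its centre
in the original `U`, so the `d`-multiplicity of the new covering is at most the multiplicity of `𝒰`.
-/

section

variable {X : Type*} [MetricSpace X]

lemma SubsetNRBounded.mono {A B : Set X} {N : ℝ → ℕ} {R : ℝ → ℝ} (hAB : A ⊆ B)
    (hB : SubsetNRBounded B N R) : SubsetNRBounded A N R :=
  fun ρ hρ₀ hρ₁ r hr a ha S hS hsep =>
    hB ρ hρ₀ hρ₁ r hr a (hAB ha) S (hS.trans (Set.inter_subset_inter_left _ hAB)) hsep

lemma SubsetNBounded.mono {A B : Set X} {N : ℝ → ℕ} (hAB : A ⊆ B) (hB : SubsetNBounded B N) :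
    SubsetNBounded A N :=
  let ⟨R, hR, hBR⟩ := hB
  ⟨R, hR, hBR.mono hAB⟩

lemma UniformlyNBounded.image_of_subset {𝒰 : Set (Set X)} {N : ℝ → ℕ} {f : Set X → Set X}
    (hf : ∀ U, f U ⊆ U) (h : UniformlyNBounded 𝒰 N) : UniformlyNBounded (f '' 𝒰) N := by
  classical
  obtain ⟨⟨R, hR, hRU⟩, hunion⟩ := h
  refine ⟨⟨R, hR, ?_⟩, fun F hF => ?_⟩
  · rintro _ ⟨U, hU, rfl⟩
    exact (hRU U hU).mono (hf U)
  · obtain ⟨G, hG, rfl⟩ := Finset.subset_set_image_iff.mp hF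
    refine (hunion G hG).mono ?_
    rintro x ⟨_, hV, hxV⟩
    obtain ⟨U, hU, rfl⟩ := Finset.mem_image.mp hV
    exact ⟨U, hU, hf U hxV⟩

lemma MultiplicityLE.dMultiplicityLE_image {𝒰 : Set (Set X)} {m : ℕ} {d : ℝ}
    {f : Set X → Set X} (hf : ∀ U x, (f U ∩ ball x d).Nonempty → x ∈ U)
    (h : MultiplicityLE 𝒰 m) : DMultiplicityLE (f '' 𝒰) d m := by
  classical
  intro x F hF hmeet
  obtain ⟨G, hG, rfl⟩ := Finset.subset_set_image_iff.mp hF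
  calc (G.image f).card ≤ G.card := Finset.card_image_le
    _ ≤ m := h x G hG fun U hU => hf U x (hmeet _ (Finset.mem_image_of_mem f hU))

lemma compl_thickening_compl_subset {d : ℝ} (hd : 0 < d) (U : Set X) :
    (thickening d Uᶜ)ᶜ ⊆ U :=
  Set.compl_subset_comm.mp (self_subset_thickening hd Uᶜ)

lemma mem_of_compl_thickening_compl_inter_ball_nonempty {d : ℝ} {U : Set X} {x : X}
    (h : ((thickening d Uᶜ)ᶜ ∩ ball x d).Nonempty) : x ∈ U := by
  obtain ⟨y, hy, hyx⟩ := h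
  by_contra hx
  exact hy (mem_thickening_iff.mpr ⟨x, hx, hyx⟩)

lemma sUnion_image_compl_thickening_compl_eq_univ {𝒰 : Set (Set X)} {d : ℝ}
    (h : ENNReal.ofReal d < LebesgueNumber 𝒰) :
    ⋃₀ ((fun U => (thickening d Uᶜ)ᶜ) '' 𝒰) = Set.univ := by
  refine Set.eq_univ_of_forall fun x => ?_
  obtain ⟨U, hx⟩ := lt_iSup_iff.mp (h.trans_le (iInf_le _ x))
  obtain ⟨hU, hdU⟩ := lt_iSup_iff.mp hx
  exact ⟨_, ⟨U, hU, rfl⟩, not_lt.mpr hdU.le⟩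

theorem HypdimLE.hypdimAuxLE {n : ℕ} (h : HypdimLE X n) : HypdimAuxLE X n := by
  intro d hd
  obtain ⟨N, 𝒰, -, hbdd, hleb, hmult⟩ := h (2 * d) (by positivity)
  have hd_lt : ENNReal.ofReal d < LebesgueNumber 𝒰 :=
    ((ENNReal.ofReal_lt_ofReal_iff (by positivity)).mpr (by linarith)).trans_le hleb
  exact ⟨N, _, sUnion_image_compl_thickening_compl_eq_univ hd_lt,
    hbdd.image_of_subset (compl_thickening_compl_subset hd),
    hmult.dMultiplicityLE_image fun _ _ => mem_of_compl_thickening_compl_inter_ball_nonempty⟩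

end

/-- Lemma 5.1: `hypdim′ X ≤ hypdim X` for every metric space. -/
theorem hypdimAux_le_hypdim (X : Type*) [MetricSpace X] : hypdimAux X ≤ hypdim X := by
  apply sInf_le_sInf
  rintro k ⟨n, hk, h⟩
  exact ⟨n, hk, h.hypdimAuxLE⟩
end
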